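/- arXiv:0712.0569 — 3 statements merged into one kernel-verified Lean document; each statement's English description precedes it below -/
import Mathlib

section
/- Every free product of finitely many finitely generated abelian groups contains a finite-index subgroup which is isomorphic to a free product of finitely many free abelian groups. -/
/-!
Write each factor as `A i ≃* F i × T i` with `F i` free abelian and `T i` finite, and take for
`H` the kernel of the projection `sndPi` of `G = ∗ᵢ (F i × T i)` onto the finite group
`Q = ∏ᵢ T i`. Order the indices and use the Schreier transversal
`σ q = (1, q i₁) ⋯ (1, q iₙ)`. Reidemeister–Schreier then exhibits `H` as the free product of the
conjugates `σ q · F i · (σ q)⁻¹` with `q i = 1`, and of infinite cyclic groups generated by the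
Schreier generators `σ q · (1, q i)⁻¹ · σ (q with q i := 1)⁻¹` of the edges `(q, i)` off the
spanning tree. Rewriting a word letter by letter shows that these subgroups generate `H`; the
rewriting process is a homomorphism from `G` to the wreath product `C ≀ Q` of the free product `C`
with `Q`, and it retracts the inclusion `C → H`, which is therefore injective.
-/

open Monoid CoprodI Function

namespace Monoid.CoprodI

variable {ι κ : Type*} {M N : ι → Type*} [∀ i, Monoid (M i)] [∀ i, Monoid (N i)]

def congrRight (f : ∀ i, M i ≃* N i) : CoprodI M ≃* CoprodI N :=
  MonoidHom.toMulEquiv (lift fun i => of.comp (f i).toMonoidHom)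
    (lift fun i => of.comp (f i).symm.toMonoidHom)
    (ext_hom _ _ fun i => by ext; simp)
    (ext_hom _ _ fun i => by ext; simp)

private theorem lift_of_cast (e : κ ≃ ι) {k : κ} {i : ι} (h : e k = i) (x : M i) :
    lift (fun k => of (M := M) (i := e k)) ((h ▸ of (M := fun k => M (e k)) (i := k)) x) =
      of x := by
  subst h; simp

private theorem cast_of_eq (e : κ ≃ ι) {k k' : κ} (hk : k' = k) (h : e k' = e k) (x : M (e k)) :
    (h ▸ of (M := fun k => M (e k)) (i := k')) x = of (M := fun k => M (e k)) x := by
  subst hk; rfl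

def reindex (e : κ ≃ ι) : CoprodI (fun k => M (e k)) ≃* CoprodI M :=
  MonoidHom.toMulEquiv (lift fun k => of (i := e k))
    (lift fun i => e.apply_symm_apply i ▸ of (M := fun k => M (e k)) (i := e.symm i))
    (ext_hom _ _ fun k => by ext x; simpa using cast_of_eq e (e.symm_apply_apply k) _ x)
    (ext_hom _ _ fun i => by ext x; simpa using lift_of_cast e _ x)

end Monoid.CoprodI

theorem CommGroup.exists_mulEquiv_freeAbelian_prod_finite (A : Type*) [CommGroup A]
    [Group.FG A] : ∃ (r : ℕ) (T : Type) (_ : CommGroup T) (_ : Finite T),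
      Nonempty (A ≃* Multiplicative (Fin r → ℤ) × T) := by
  obtain ⟨κ, J, _, _, p, hp, e, ⟨f⟩⟩ := CommGroup.equiv_free_prod_prod_multiplicative_zmod A
  have : ∀ i, NeZero (p i ^ e i) := fun i => ⟨pow_ne_zero _ (hp i).ne_zero⟩
  have eFree : (J → Multiplicative ℤ) ≃* Multiplicative (Fin (Fintype.card J) → ℤ) :=
    (MulEquiv.arrowCongr (Fintype.equivFin J) (.refl _)).trans
      (MulEquiv.piMultiplicative fun _ => ℤ).symm
  exact ⟨_, _, inferInstance, inferInstance, ⟨f.trans (eFree.prodCongr (.refl _))⟩⟩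

def rightTranslate (Q N : Type*) [Group Q] [Mul N] : Q →* MulAut (Q → N) where
  toFun p :=
    { toFun := fun u x => u (x * p)
      invFun := fun u x => u (x * p⁻¹)
      left_inv := fun u => by simp
      right_inv := fun u => by simp
      map_mul' := fun _ _ => rfl }
  map_one' := by ext; simp
  map_mul' p p' := by ext; simp [mul_assoc]

@[simp]
theorem rightTranslate_apply {Q N : Type*} [Group Q] [Mul N] (p : Q) (u : Q → N) (x : Q) :
    rightTranslate Q N p u x = u (x * p) := rfl

abbrev Wreath (N Q : Type*) [Group N] [Group Q] := (Q → N) ⋊[rightTranslate Q N] Q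

namespace Pi

variable {ι : Type*} [DecidableEq ι] {T : ι → Type*} [∀ i, Group (T i)]

theorem mul_mulSingle_inv_eq_update (q : ∀ i, T i) (i : ι) :
    q * Pi.mulSingle i (q i)⁻¹ = update q i 1 := by
  ext j
  by_cases h : j = i
  · subst h; simp
  · simp [h]

theorem update_mul_mulSingle (q : ∀ i, T i) (i : ι) (t v : T i) :
    update (q * Pi.mulSingle i t) i v = update q i v := by
  ext j
  by_cases h : j = i
  · subst h; simp
  · simp [h]

end Pi

namespace KerSndPi

section Transversal

variable {ι : Type*} (F : ι → Type) (T : ι → Type*) [∀ i, Group (F i)] [∀ i, Group (T i)]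

local notation "G" => CoprodI fun i => F i × T i

def ofFst (i : ι) : F i →* G := of.comp (MonoidHom.inl _ _)

def ofSnd (i : ι) : T i →* G := of.comp (MonoidHom.inr _ _)

def transversalList (l : List ι) (q : ∀ i, T i) : G := (l.map fun i => ofSnd F T i (q i)).prod

variable {F T}

theorem of_eq_ofFst_mul_ofSnd {i : ι} (a : F i × T i) :
    (of a : G) = ofFst F T i a.1 * ofSnd F T i a.2 := by
  simp [ofFst, ofSnd, ← map_mul]

theorem ofFst_commute_ofSnd {i : ι} (f : F i) (t : T i) :
    Commute (ofFst F T i f) (ofSnd F T i t) := by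
  simp [Commute, SemiconjBy, ofFst, ofSnd, ← map_mul]

@[simp]
theorem transversalList_nil (q : ∀ i, T i) : transversalList F T [] q = 1 := rfl

@[simp]
theorem transversalList_cons (i : ι) (l : List ι) (q : ∀ i, T i) :
    transversalList F T (i :: l) q = ofSnd F T i (q i) * transversalList F T l q := rfl

theorem transversalList_eq_one {l : List ι} {q : ∀ i, T i} (h : ∀ j ∈ l, q j = 1) :
    transversalList F T l q = 1 :=
  List.prod_eq_one (by simp +contextual [h])

variable [DecidableEq ι]

variable (F T) in
def sndPi : G →* ∀ i, T i :=
  lift fun i => (MonoidHom.mulSingle T i).comp (MonoidHom.snd _ _)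

@[simp]
theorem sndPi_of {i : ι} (a : F i × T i) : sndPi F T (of a) = Pi.mulSingle i a.2 := by
  simp [sndPi]

@[simp]
theorem sndPi_ofFst {i : ι} (f : F i) : sndPi F T (ofFst F T i f) = 1 := by
  simp [ofFst]

@[simp]
theorem sndPi_ofSnd {i : ι} (t : T i) : sndPi F T (ofSnd F T i t) = Pi.mulSingle i t := by
  simp [ofSnd]

theorem sndPi_transversalList {l : List ι} (hl : l.Nodup) (q : ∀ i, T i) (j : ι) :
    sndPi F T (transversalList F T l q) j = if j ∈ l then q j else 1 := by
  induction l with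
  | nil => simp
  | cons i l ih =>
    rw [List.nodup_cons] at hl
    rw [transversalList_cons, map_mul, Pi.mul_apply, ih hl.2, sndPi_ofSnd]
    by_cases hji : j = i
    · subst hji; simp [hl.1]
    · simp [hji]

end Transversal

section Tree

variable {ι : Type*} [LinearOrder ι] {F : ι → Type} {T : ι → Type*}
  [∀ i, Group (F i)] [∀ i, Group (T i)]

theorem transversalList_eq_mul {l : List ι} (hl : l.Pairwise (· < ·)) {q : ∀ i, T i} {i : ι}
    (hi : i ∈ l) (h : ∀ j, i < j → q j = 1) :
    transversalList F T l q = transversalList F T l (update q i 1) * ofSnd F T i (q i) := by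
  induction l with
  | nil => simp at hi
  | cons a l ih =>
    rw [List.pairwise_cons] at hl
    rcases List.mem_cons.mp hi with rfl | hi
    · have hq : ∀ j ∈ l, q j = 1 := fun j hj => h j (hl.1 j hj)
      have hq' : ∀ j ∈ l, update q i 1 j = 1 := fun j hj => by
        rw [update_of_ne (hl.1 j hj).ne', hq j hj]
      simp [transversalList_eq_one hq, transversalList_eq_one hq']
    · rw [transversalList_cons, transversalList_cons, ih hl.2 hi, update_of_ne (hl.1 i hi).ne,
        mul_assoc]

variable [Fintype ι]

variable (F T) in
def transversal (q : ∀ i, T i) : CoprodI fun i => F i × T i :=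
  transversalList F T Finset.univ.sort q

@[simp]
theorem sndPi_transversal (q : ∀ i, T i) : sndPi F T (transversal F T q) = q := by
  ext j
  simp [transversal, sndPi_transversalList (Finset.sort_nodup _ _)]

@[simp]
theorem transversal_one : transversal F T (1 : ∀ i, T i) = 1 :=
  transversalList_eq_one fun _ _ => rfl

theorem transversal_eq_mul {q : ∀ i, T i} {i : ι} (h : ∀ j, i < j → q j = 1) :
    transversal F T q = transversal F T (update q i 1) * ofSnd F T i (q i) :=
  transversalList_eq_mul (Finset.sortedLT_sort _).pairwise (by simp) h

variable (T) in
def IsTreeEdge (q : ∀ i, T i) (i : ι) : Prop := q i = 1 ∨ ∀ j, i < j → q j = 1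

variable (F) in
def schreierGen (q : ∀ i, T i) (i : ι) : CoprodI fun i => F i × T i :=
  transversal F T q * ofSnd F T i (q i)⁻¹ * (transversal F T (update q i 1))⁻¹

theorem schreierGen_eq_one {q : ∀ i, T i} {i : ι} (h : IsTreeEdge T q i) :
    schreierGen F q i = 1 := by
  rcases h with h | h
  · rw [schreierGen, h, ← h, update_eq_self, h]
    simp
  · rw [schreierGen, transversal_eq_mul h, map_inv]
    group

end Tree

section Kernel

variable {ι : Type*} [LinearOrder ι] (F : ι → Type) (T : ι → Type*)
  [∀ i, Group (F i)] [∀ i, Group (T i)]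

local notation "G" => CoprodI fun i => F i × T i

/-- `.inl ⟨i, q, _⟩` is the vertex group `F i` at the coset of `T i` represented by `q`,
`.inr ⟨(q, i), _⟩` the infinite cyclic group of a non-tree edge. -/
abbrev Idx : Type _ :=
  (Σ i, {q : ∀ j, T j // q i = 1}) ⊕ {e : (∀ j, T j) × ι // ¬ IsTreeEdge T e.1 e.2}

def Factor : Idx T → Type
  | .inl s => F s.1
  | .inr _ => Multiplicative ℤ

instance : ∀ j, Group (Factor F T j)
  | .inl s => inferInstanceAs (Group (F s.1))
  | .inr _ => inferInstanceAs (Group (Multiplicative ℤ))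

local notation "C" => CoprodI (Factor F T)

def ofVertex (i : ι) (q : ∀ j, T j) (hq : q i = 1) : F i →* C :=
  of (M := Factor F T) (i := .inl ⟨i, q, hq⟩)

def ofEdge (e : {e : (∀ j, T j) × ι // ¬ IsTreeEdge T e.1 e.2}) : Multiplicative ℤ →* C :=
  of (M := Factor F T) (i := .inr e)

open scoped Classical in
noncomputable def edgeGen (q : ∀ j, T j) (i : ι) : C :=
  if h : IsTreeEdge T q i then 1 else ofEdge F T ⟨(q, i), h⟩ (.ofAdd 1)

variable {F T}

theorem ofVertex_congr {i : ι} {q q' : ∀ j, T j} (h : q = q') (hq : q i = 1) (hq' : q' i = 1) :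
    ofVertex F T i q hq = ofVertex F T i q' hq' := by
  subst h; rfl

theorem edgeGen_of_isTreeEdge {q : ∀ j, T j} {i : ι} (h : IsTreeEdge T q i) :
    edgeGen F T q i = 1 :=
  dif_pos h

theorem edgeGen_of_not_isTreeEdge {q : ∀ j, T j} {i : ι} (h : ¬ IsTreeEdge T q i) :
    edgeGen F T q i = ofEdge F T ⟨(q, i), h⟩ (.ofAdd 1) :=
  dif_neg h

theorem hom_ext {N : Type*} [Monoid N] {φ ψ : C →* N}
    (hv : ∀ i q hq f, φ (ofVertex F T i q hq f) = ψ (ofVertex F T i q hq f))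
    (he : ∀ q i, φ (edgeGen F T q i) = ψ (edgeGen F T q i)) : φ = ψ :=
  ext_hom _ _ fun
    | .inl ⟨i, q, hq⟩ => MonoidHom.ext (hv i q hq)
    | .inr ⟨(q, i), h⟩ => MonoidHom.ext_mint <| by
      have h' := he q i
      rw [edgeGen_of_not_isTreeEdge h] at h'
      exact h'

variable [Fintype ι]

variable (F T) in
def inclFactor : ∀ j, Factor F T j →* G
  | .inl ⟨i, q, _⟩ => (MulAut.conj (transversal F T q)).toMonoidHom.comp (ofFst F T i)
  | .inr ⟨(q, i), _⟩ => zpowersHom _ (schreierGen F q i)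

variable (F T) in
def incl : C →* G := lift (inclFactor F T)

theorem incl_ofVertex (i : ι) (q : ∀ j, T j) (hq : q i = 1) (f : F i) :
    incl F T (ofVertex F T i q hq f) =
      transversal F T q * ofFst F T i f * (transversal F T q)⁻¹ :=
  lift_of (inclFactor F T) (i := .inl ⟨i, q, hq⟩) f

theorem incl_edgeGen (q : ∀ j, T j) (i : ι) : incl F T (edgeGen F T q i) = schreierGen F q i := by
  by_cases h : IsTreeEdge T q i
  · rw [edgeGen_of_isTreeEdge h, schreierGen_eq_one h, map_one]
  · rw [edgeGen_of_not_isTreeEdge h]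
    exact (lift_of (inclFactor F T) (i := .inr ⟨(q, i), h⟩) _).trans (zpow_one _)

theorem sndPi_comp_incl : (sndPi F T).comp (incl F T) = 1 := by
  refine hom_ext (fun i q hq f => ?_) fun q i => ?_
  · simp [incl_ofVertex]
  · simp only [MonoidHom.comp_apply, incl_edgeGen, schreierGen, map_mul, map_inv,
      sndPi_transversal, sndPi_ofSnd, ← Pi.mulSingle_inv, Pi.mul_mulSingle_inv_eq_update,
      mul_inv_cancel, MonoidHom.one_apply]

theorem schreierGen_mem_range (q : ∀ j, T j) (i : ι) : schreierGen F q i ∈ (incl F T).range :=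
  ⟨_, incl_edgeGen q i⟩

theorem conj_ofFst_mem_range (x : ∀ j, T j) (i : ι) (f : F i) :
    transversal F T x * ofFst F T i f * (transversal F T x)⁻¹ ∈ (incl F T).range := by
  have key : transversal F T x * ofFst F T i f * (transversal F T x)⁻¹ =
      schreierGen F x i *
        (transversal F T (update x i 1) * ofFst F T i f * (transversal F T (update x i 1))⁻¹) *
        (schreierGen F x i)⁻¹ := by
    conv_lhs => rw [← (ofFst_commute_ofSnd (T := T) f (x i)⁻¹).symm.mul_inv_cancel]
    simp only [schreierGen]
    group
  rw [key]
  exact mul_mem (mul_mem (schreierGen_mem_range x i) ⟨_, incl_ofVertex i _ (update_self ..) f⟩)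
    (inv_mem (schreierGen_mem_range x i))

theorem transversal_mul_ofSnd_mem_range (x : ∀ j, T j) (i : ι) (t : T i) :
    transversal F T x * ofSnd F T i t * (transversal F T (x * Pi.mulSingle i t))⁻¹ ∈
      (incl F T).range := by
  have ht : ofSnd F T i t =
      ofSnd F T i (x i)⁻¹ * (ofSnd F T i ((x * Pi.mulSingle i t) i)⁻¹)⁻¹ := by
    rw [← map_inv, ← map_mul]
    simp
  have key : transversal F T x * ofSnd F T i t * (transversal F T (x * Pi.mulSingle i t))⁻¹ =
      schreierGen F x i * (schreierGen F (x * Pi.mulSingle i t) i)⁻¹ := by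
    rw [schreierGen, schreierGen, Pi.update_mul_mulSingle, ht]
    group
  rw [key]
  exact mul_mem (schreierGen_mem_range x i) (inv_mem (schreierGen_mem_range _ i))

theorem transversal_mul_mem_range (g : G) (x : ∀ j, T j) :
    transversal F T x * g * (transversal F T (x * sndPi F T g))⁻¹ ∈ (incl F T).range := by
  induction g using CoprodI.induction_on generalizing x with
  | one => simp
  | of i a =>
    have key : transversal F T x * of (M := fun i => F i × T i) a *
        (transversal F T (x * sndPi F T (of a)))⁻¹ =
        (transversal F T x * ofFst F T i a.1 * (transversal F T x)⁻¹) *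
          (transversal F T x * ofSnd F T i a.2 * (transversal F T (x * Pi.mulSingle i a.2))⁻¹) := by
      rw [sndPi_of, of_eq_ofFst_mul_ofSnd]
      group
    rw [key]
    exact mul_mem (conj_ofFst_mem_range x i a.1) (transversal_mul_ofSnd_mem_range x i a.2)
  | mul g h hg hh =>
    have key : transversal F T x * (g * h) * (transversal F T (x * sndPi F T (g * h)))⁻¹ =
        (transversal F T x * g * (transversal F T (x * sndPi F T g))⁻¹) *
          (transversal F T (x * sndPi F T g) * h *
            (transversal F T (x * sndPi F T g * sndPi F T h))⁻¹) := by
      rw [map_mul, mul_assoc x]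
      group
    rw [key]
    exact mul_mem (hg x) (hh _)

theorem ker_sndPi_le_range_incl : (sndPi F T).ker ≤ (incl F T).range := fun g hg => by
  simpa [MonoidHom.mem_ker.mp hg] using transversal_mul_mem_range g 1

end Kernel

section Rewrite

variable {ι : Type*} [LinearOrder ι] (F : ι → Type) (T : ι → Type*)
  [∀ i, Group (F i)] [∀ i, Group (T i)]

local notation "G" => CoprodI fun i => F i × T i
local notation "C" => CoprodI (Factor F T)

/-- Reading the letter `a` at the coset `x`: enter along the edge `(x, i)`, record `a.1` in the
vertex group, leave along the edge `(x * a.2, i)`. -/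
noncomputable def rewriteCocycle (i : ι) (a : F i × T i) (x : ∀ j, T j) : C :=
  edgeGen F T x i * ofVertex F T i (update x i 1) (update_self ..) a.1 *
    (edgeGen F T (x * Pi.mulSingle i a.2) i)⁻¹

variable {F T} in
theorem rewriteCocycle_mul (i : ι) (a b : F i × T i) (x : ∀ j, T j) :
    rewriteCocycle F T i (a * b) x =
      rewriteCocycle F T i a x * rewriteCocycle F T i b (x * Pi.mulSingle i a.2) := by
  have hv := ofVertex_congr (F := F) (Pi.update_mul_mulSingle x i a.2 1) (update_self ..)
    (update_self ..)
  simp only [rewriteCocycle, hv, Prod.fst_mul, Prod.snd_mul, Pi.mulSingle_mul, mul_assoc, map_mul]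
  group

noncomputable def rewriteFactor (i : ι) : F i × T i →* Wreath C (∀ j, T j) where
  toFun a := ⟨rewriteCocycle F T i a, Pi.mulSingle i a.2⟩
  map_one' := by ext x <;> simp [rewriteCocycle]
  map_mul' a b := SemidirectProduct.ext (funext (rewriteCocycle_mul i a b)) (Pi.mulSingle_mul ..)

noncomputable def rewrite : G →* Wreath C (∀ j, T j) := lift (rewriteFactor F T)

variable {F T}

theorem rewrite_of {i : ι} (a : F i × T i) :
    rewrite F T (of a) = ⟨rewriteCocycle F T i a, Pi.mulSingle i a.2⟩ :=
  lift_of _ _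

theorem rewrite_right (g : G) : (rewrite F T g).right = sndPi F T g := by
  have : SemidirectProduct.rightHom.comp (rewrite F T) = sndPi F T :=
    ext_hom _ _ fun i => MonoidHom.ext fun a => by simp [rewrite_of]
  exact congr($this g)

theorem rewrite_mul_left (g h : G) (x : ∀ j, T j) :
    (rewrite F T (g * h)).left x =
      (rewrite F T g).left x * (rewrite F T h).left (x * sndPi F T g) := by
  rw [map_mul, SemidirectProduct.mul_left, rewrite_right]
  rfl

theorem rewrite_inv_left (g : G) (x : ∀ j, T j) :
    (rewrite F T g⁻¹).left x = ((rewrite F T g).left (x * (sndPi F T g)⁻¹))⁻¹ := by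
  rw [map_inv, SemidirectProduct.inv_left, rewrite_right]
  rfl

theorem rewrite_transversalList_left {l : List ι} (hl : l.Pairwise (· < ·)) (q : ∀ j, T j)
    {x : ∀ j, T j} (hx : ∀ i ∈ l, ∀ j, i ≤ j → x j = 1) :
    (rewrite F T (transversalList F T l q)).left x = 1 := by
  induction l generalizing x with
  | nil => rfl
  | cons i l ih =>
    rw [List.pairwise_cons] at hl
    have hx' : ∀ j, i < j → (x * Pi.mulSingle i (q i)) j = 1 := fun j hj => by
      simp [Pi.mulSingle_eq_of_ne hj.ne', hx i List.mem_cons_self j hj.le]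
    rw [transversalList_cons, rewrite_mul_left, sndPi_ofSnd, ofSnd, MonoidHom.comp_apply,
      MonoidHom.inr_apply, rewrite_of, ih hl.2 fun i' hi' j hj => hx' j ((hl.1 i' hi').trans_le hj)]
    simp [rewriteCocycle, edgeGen_of_isTreeEdge (.inl (hx i List.mem_cons_self i le_rfl)),
      edgeGen_of_isTreeEdge (.inr hx')]

variable [Fintype ι]

@[simp]
theorem rewrite_transversal_left (q : ∀ j, T j) : (rewrite F T (transversal F T q)).left 1 = 1 :=
  rewrite_transversalList_left (Finset.sortedLT_sort Finset.univ).pairwise q fun _ _ _ _ => rfl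

theorem rewrite_conj_left {q q' : ∀ j, T j} {g : G} (h : q * sndPi F T g = q') :
    (rewrite F T (transversal F T q * g * (transversal F T q')⁻¹)).left 1 =
      (rewrite F T g).left q := by
  rw [rewrite_mul_left, rewrite_mul_left, rewrite_inv_left, map_mul, sndPi_transversal,
    sndPi_transversal, one_mul, one_mul, h, mul_inv_cancel, rewrite_transversal_left,
    rewrite_transversal_left, one_mul, inv_one, mul_one]

end Rewrite

section Equiv

variable {ι : Type*} [LinearOrder ι] [Fintype ι] (F : ι → Type) (T : ι → Type*)
  [∀ i, Group (F i)] [∀ i, Group (T i)]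

noncomputable def retract : (sndPi F T).ker →* CoprodI (Factor F T) where
  toFun g := (rewrite F T g).left 1
  map_one' := by simp
  map_mul' g h := by
    change (rewrite F T (g.1 * h.1)).left 1 = (rewrite F T g.1).left 1 * (rewrite F T h.1).left 1
    rw [rewrite_mul_left, one_mul, MonoidHom.mem_ker.mp g.2]

theorem incl_mem_ker (c : CoprodI (Factor F T)) : incl F T c ∈ (sndPi F T).ker :=
  congr($(sndPi_comp_incl) c)

theorem retract_comp_codRestrict_incl :
    (retract F T).comp ((incl F T).codRestrict _ (incl_mem_ker F T)) = .id _ := by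
  refine hom_ext (fun i q hq f => ?_) fun q i => ?_
  · change (rewrite F T (incl F T (ofVertex F T i q hq f))).left 1 = ofVertex F T i q hq f
    have hu : update q i 1 = q := by rw [← hq, update_eq_self]
    rw [incl_ofVertex, rewrite_conj_left (by rw [sndPi_ofFst, mul_one]), ofFst,
      MonoidHom.comp_apply, MonoidHom.inl_apply, rewrite_of]
    simp [rewriteCocycle, edgeGen_of_isTreeEdge (.inl hq), ofVertex_congr hu _ hq]
  · change (rewrite F T (incl F T (edgeGen F T q i))).left 1 = edgeGen F T q i
    rw [incl_edgeGen, schreierGen,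
      rewrite_conj_left (by rw [sndPi_ofSnd]; exact Pi.mul_mulSingle_inv_eq_update q i), ofSnd,
      MonoidHom.comp_apply, MonoidHom.inr_apply, rewrite_of]
    simp [rewriteCocycle, Pi.mul_mulSingle_inv_eq_update,
      edgeGen_of_isTreeEdge (.inl (update_self ..))]

noncomputable def equivCoprodI : (sndPi F T).ker ≃* CoprodI (Factor F T) :=
  (MulEquiv.ofBijective ((incl F T).codRestrict _ (incl_mem_ker F T))
    ⟨Function.LeftInverse.injective (g := retract F T)
      fun c => congr($(retract_comp_codRestrict_incl F T) c),
     fun ⟨_, hg⟩ => (ker_sndPi_le_range_incl hg).imp fun _ hc => Subtype.ext hc⟩).symm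

end Equiv

section FreeAbelian

variable {ι : Type*} [LinearOrder ι] {T : ι → Type*} [∀ i, Group (T i)]

def factorRank (r : ι → ℕ) : Idx T → ℕ
  | .inl s => r s.1
  | .inr _ => 1

def factorMulEquiv (r : ι → ℕ) :
    ∀ j, Factor (fun i => Multiplicative (Fin (r i) → ℤ)) T j ≃*
      Multiplicative (Fin (factorRank r j) → ℤ)
  | .inl _ => MulEquiv.refl _
  | .inr _ => (AddEquiv.funUnique (Fin 1) ℤ).symm.toMultiplicative

end FreeAbelian

end KerSndPi

open KerSndPi in
/-- A free product of finitely many finitely generated abelian groups has a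
finite-index subgroup isomorphic to a free product of finitely many free abelian
groups. -/
theorem stmt_9 (ι : Type*) [Finite ι] (A : ι → Type*) [∀ i, CommGroup (A i)]
    [∀ i, Group.FG (A i)] :
    ∃ H : Subgroup (Monoid.CoprodI A), H.FiniteIndex ∧
      ∃ (k : ℕ) (r : Fin k → ℕ), Nonempty
        (H ≃* Monoid.CoprodI (fun i : Fin k => Multiplicative (Fin (r i) → ℤ))) := by
  have := Fintype.ofFinite ι
  let _ : LinearOrder ι := LinearOrder.lift' _ (Fintype.equivFin ι).injective
  choose r T _ _ e using fun i => CommGroup.exists_mulEquiv_freeAbelian_prod_finite (A i)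
  let F := fun i => Multiplicative (Fin (r i) → ℤ)
  let E : CoprodI A ≃* CoprodI fun i => F i × T i := CoprodI.congrRight fun i => (e i).some
  obtain ⟨k, ⟨σ⟩⟩ := Finite.exists_equiv_fin (Idx T)
  refine ⟨(sndPi F T).ker.map (E.symm : _ →* _), ⟨?_⟩, k, fun m => factorRank r (σ.symm m),
    ⟨?_⟩⟩
  · rw [Subgroup.index_map_equiv]
    exact Subgroup.FiniteIndex.index_ne_zero
  · exact (E.symm.subgroupMap _).symm.trans <| (equivCoprodI F T).trans <|
      (CoprodI.congrRight (factorMulEquiv r)).trans (CoprodI.reindex σ.symm).symm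
end

section
/- If F is a free group of rank n ≥ 2 and H ≤ F is a subgroup of finite index d, then H is a free group of rank d(n − 1) + 1. -/
/-!
`H` is the vertex group of the action groupoid of `F` on `F ⧸ H`, a free groupoid whose generating
graph (the Schreier graph) has `d` vertices and `n * d` edges. Collapsing a spanning tree, which has
`d - 1` edges, leaves the vertex group freely generated by one loop for each of the remaining
`n * d - (d - 1) = d * (n - 1) + 1` edges.
-/

universe u

open Quiver CategoryTheory IsFreeGroupoid

namespace Quiver.Arborescence

variable {V : Type*} [Quiver V] [Arborescence V]

lemma length_default_eq_of_arrow {a b : V} (e : a ⟶ b) :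
    (default : Path (Quiver.root V) b).length = (default : Path (Quiver.root V) a).length + 1 := by
  rw [← Unique.eq_default ((default : Path (Quiver.root V) a).cons e), Path.length_cons]

lemma not_arrow_and_reverse {a b : V} (e : a ⟶ b) (f : b ⟶ a) : False := by
  have := length_default_eq_of_arrow e
  have := length_default_eq_of_arrow f
  omega

lemma not_arrow_to_root {a : V} (e : a ⟶ Quiver.root V) : False :=
  Path.cons_ne_nil default e (Subsingleton.elim _ _)

noncomputable def totalEquivNeRoot : Total V ≃ {b : V // b ≠ Quiver.root V} :=
  Equiv.ofBijective (fun t => ⟨t.right, fun h => not_arrow_to_root (h ▸ t.hom)⟩) <| by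
    refine ⟨?_, fun ⟨b, hb⟩ => ?_⟩
    · rintro ⟨a, b, e⟩ ⟨a', b', e'⟩ ⟨⟩
      have h := (Unique.eq_default ((default : Path (Quiver.root V) a).cons e)).trans
        (Unique.eq_default ((default : Path (Quiver.root V) a').cons e')).symm
      obtain rfl := Path.obj_eq_of_cons_eq_cons h
      obtain rfl := eq_of_heq (Path.hom_heq_of_cons_eq_cons h)
      rfl
    · cases h : (default : Path (Quiver.root V) b) with
      | nil => exact absurd rfl hb
      | cons _ e => exact ⟨⟨_, b, e⟩, rfl⟩

lemma card_total_add_one [Finite V] : Nat.card (Total V) + 1 = Nat.card V := by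
  classical
  rw [Nat.card_congr totalEquivNeRoot, ← Nat.card_congr (Equiv.optionSubtypeNe (Quiver.root V)),
    Finite.card_option]

end Quiver.Arborescence

noncomputable def Quiver.totalEquivWideSubquiverSymmetrify {W : Type*} [Quiver W]
    (T : WideSubquiver (Symmetrify W)) [Arborescence T] :
    Total T ≃ wideSubquiverEquivSetTotal (wideSubquiverSymmetrify T) := by
  refine Equiv.ofBijective (fun t => match t with
    | ⟨a, b, ⟨.inl e, he⟩⟩ => ⟨⟨a, b, e⟩, .inl he⟩
    | ⟨a, b, ⟨.inr e, he⟩⟩ => ⟨⟨(b : W), (a : W), e⟩, .inr he⟩) ⟨?_, ?_⟩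
  · rintro ⟨a, b, ⟨e | e, he⟩⟩ ⟨a', b', ⟨e' | e', he'⟩⟩ h <;>
      obtain ⟨rfl, rfl, ⟨⟩⟩ := Total.mk.inj (Subtype.mk.inj h)
    all_goals first
      | rfl
      | exact (Arborescence.not_arrow_and_reverse (show (a : T) ⟶ b from ⟨_, he⟩) ⟨_, he'⟩).elim
  · rintro ⟨⟨a, b, e⟩, he | he⟩
    · exact ⟨⟨a, b, ⟨.inl e, he⟩⟩, rfl⟩
    · exact ⟨⟨b, a, ⟨.inr e, he⟩⟩, rfl⟩

namespace IsFreeGroupoid.SpanningTree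

variable {G : Type u} [Groupoid.{u} G] [IsFreeGroupoid G]
  (T : WideSubquiver (Symmetrify <| Generators G)) [Arborescence T]

def treeRoot : G := show T from root T

lemma treeHom_treeRoot : treeHom T (treeRoot T) = 𝟙 _ :=
  treeHom_eq T Path.nil

lemma loopOfHom_eq_self (x : End (treeRoot T)) : loopOfHom T x = x := by
  simp only [loopOfHom, treeHom_treeRoot]
  exact (show 𝟙 (treeRoot T) ≫ x ≫ inv (𝟙 (treeRoot T)) = x by simp)

variable {T} in
lemma map_homOfPath_eq_one {X : Type u} [Group X] {F : G ⥤ CategoryTheory.SingleObj X}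
    (hF : ∀ (a b : Generators G) (e : a ⟶ b), e ∈ wideSubquiverSymmetrify T a b →
      F.map (of e) = 1) {a : G} (p : Path (root T) a) :
    F.map (homOfPath T p) = 1 := by
  induction p with
  | nil => exact F.map_id _
  | cons p e ih =>
    change F.map (homOfPath T p ≫ _) = 1
    rw [F.map_comp, SingleObj.comp_as_mul, ih, mul_one]
    rcases e with ⟨e | e, he⟩
    · exact hF _ _ e (.inl he)
    · rw [Functor.map_inv, SingleObj.inv_as_inv, inv_eq_one]
      exact hF _ _ e (.inr he)

variable {T} in
lemma map_loopOfHom {X : Type u} [Group X] {F : G ⥤ CategoryTheory.SingleObj X}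
    (hF : ∀ (a b : Generators G) (e : a ⟶ b), e ∈ wideSubquiverSymmetrify T a b →
      F.map (of e) = 1) {a b : G} (q : a ⟶ b) :
    F.map (loopOfHom T q) = F.map q := by
  simp only [loopOfHom, treeHom, Functor.map_comp, Functor.map_inv, SingleObj.comp_as_mul,
    SingleObj.inv_as_inv, map_homOfPath_eq_one hF, inv_one, mul_one, one_mul]

noncomputable def endBasis :
    FreeGroupBasis ((wideSubquiverEquivSetTotal (wideSubquiverSymmetrify T))ᶜ : Set _)
      (End (treeRoot T)) :=
  FreeGroupBasis.ofUniqueLift _ (fun e => loopOfHom T (of e.val.hom)) fun {X} _ f => by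
    classical
    let f' : Labelling (Generators G) X := fun a b e =>
      if h : e ∈ wideSubquiverSymmetrify T a b then 1 else f ⟨⟨a, b, e⟩, h⟩
    obtain ⟨F, hF, hF_unique⟩ := unique_lift f'
    have hF_tree : ∀ a b (e : a ⟶ b), e ∈ wideSubquiverSymmetrify T a b → F.map (of e) = 1 :=
      fun a b e h => (hF a b e).trans (dif_pos h)
    refine ⟨F.mapEnd _, fun ⟨⟨a, b, e⟩, h⟩ => ?_, fun E hE => ?_⟩
    · exact (map_loopOfHom (a := a) (b := b) hF_tree (of e)).trans
        ((hF a b e).trans (dif_neg h))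
    · have hE_F : functorOfMonoidHom T E = F := hF_unique _ fun a b e => by
        change E (loopOfHom T (of e)) = dite _ _ _
        split_ifs with h
        · rw [loopOfHom_eq_id T e h]
          exact E.map_one
        · exact hE ⟨⟨a, b, e⟩, h⟩
      ext x
      change E x = F.map x
      rw [← hE_F]
      exact congrArg E (loopOfHom_eq_self T x).symm

end IsFreeGroupoid.SpanningTree

noncomputable def IsFreeGroupoid.totalGeneratorsActionCategoryEquiv {G A : Type u} [Group G]
    [IsFreeGroup G] [MulAction G A] :
    Total (Generators (ActionCategory G A)) ≃ IsFreeGroup.Generators G × A where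
  toFun t := (t.hom.val, (show ActionCategory G A from t.left).back)
  invFun p := ⟨(p.2 : ActionCategory G A), ((IsFreeGroup.of p.1 • p.2 : A) : ActionCategory G A),
    ⟨p.1, rfl⟩⟩
  left_inv := by
    rintro ⟨⟨⟨⟩, a : A⟩, ⟨⟨⟩, b : A⟩, ⟨e, rfl : IsFreeGroup.of e • a = b⟩⟩
    rfl
  right_inv _ := rfl

theorem Subgroup.exists_freeGroupBasis_card_add_index {G : Type u} [Group G] [IsFreeGroup G]
    [Finite (IsFreeGroup.Generators G)] (H : Subgroup G) [H.FiniteIndex] :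
    ∃ (ι : Type u) (_ : Finite ι),
      Nat.card ι + H.index = H.index * Nat.card (IsFreeGroup.Generators G) + 1 ∧
        Nonempty (FreeGroupBasis ι H) := by
  classical
  let r : ActionCategory G (G ⧸ H) := ActionCategory.objEquiv G (G ⧸ H) ((1 : G) : G ⧸ H)
  have : RootedConnected (V := Symmetrify (Generators (ActionCategory G (G ⧸ H)))) r :=
    @generators_connected _ _ (inferInstanceAs (IsConnected (ActionCategory G (G ⧸ H)))) _ r
  let T : WideSubquiver (Symmetrify (Generators (ActionCategory G (G ⧸ H)))) :=
    geodesicSubtree r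
  let : Arborescence T :=
    geodesicArborescence (V := Symmetrify (Generators (ActionCategory G (G ⧸ H)))) r
  let S := wideSubquiverEquivSetTotal (wideSubquiverSymmetrify T)
  have : Finite (G ⧸ H) := H.finite_quotient_of_finiteIndex
  have : Finite T := Finite.of_equiv _ (ActionCategory.objEquiv G (G ⧸ H))
  have : Finite (Total (Generators (ActionCategory G (G ⧸ H)))) :=
    Finite.of_equiv _ totalGeneratorsActionCategoryEquiv.symm
  have hS : Nat.card S + 1 = H.index := by
    rw [Nat.card_congr (totalEquivWideSubquiverSymmetrify T).symm,
      Arborescence.card_total_add_one]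
    exact Nat.card_congr (ActionCategory.objEquiv G (G ⧸ H)).symm
  have hSc : Nat.card S + Nat.card (Sᶜ : Set _) =
      H.index * Nat.card (IsFreeGroup.Generators G) := by
    rw [← Nat.card_sum, Nat.card_congr (Equiv.Set.sumCompl S),
      Nat.card_congr totalGeneratorsActionCategoryEquiv, Nat.card_prod, mul_comm]
    rfl
  exact ⟨(Sᶜ : Set _), inferInstance, by omega,
    ⟨(SpanningTree.endBasis T).map
      (ActionCategory.endMulEquivSubgroup H)⟩⟩

/-- Nielsen–Schreier with the index formula: a subgroup of index d of a free group
of rank n ≥ 2 is free of rank d(n-1)+1. -/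
theorem stmt_15 (n d : ℕ) (hn : 2 ≤ n) (H : Subgroup (FreeGroup (Fin n)))
    (hd : H.index = d) (hfin : H.FiniteIndex) :
    Nonempty (H ≃* FreeGroup (Fin (d * (n - 1) + 1))) := by
  have eGen : Fin n ≃ IsFreeGroup.Generators (FreeGroup (Fin n)) :=
    Equiv.ofFreeGroupEquiv (IsFreeGroup.toFreeGroup _)
  have : Finite (IsFreeGroup.Generators (FreeGroup (Fin n))) := Finite.of_equiv _ eGen
  obtain ⟨ι, _, hcard, ⟨b⟩⟩ := H.exists_freeGroupBasis_card_add_index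
  obtain ⟨m, rfl⟩ : ∃ m, n = m + 1 := ⟨n - 1, by omega⟩
  rw [← Nat.card_congr eGen, Nat.card_fin, hd, mul_add, mul_one] at hcard
  rw [Nat.add_sub_cancel]
  exact ⟨(b.reindex (Finite.equivFinOfCardEq (by omega))).repr⟩
end

section
/- A free product A * B of two nontrivial finite groups, not both of order 2, contains a finite-index subgroup that is a nonabelian free group; in particular A * B is virtually free. -/
open Monoid Monoid.CoprodI Monoid.CoprodI.Word

namespace Stmt19

/-! ### Word combinatorics in an indexed free product -/

section Words

variable {ι : Type*} [DecidableEq ι] {M : ι → Type*} [∀ i, Group (M i)] [∀ i, DecidableEq (M i)]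

theorem toList_of_smul {i : ι} {m : M i} (h1 : m ≠ 1) {w : Word M} (h2 : w.fstIdx ≠ some i) :
    (CoprodI.of m • w).toList = ⟨i, m⟩ :: w.toList := by
  rw [← Word.cons_eq_smul (h1 := h2) (h2 := h1)]
  rfl

omit [DecidableEq ι] [(i : ι) → DecidableEq (M i)] in
theorem fstIdx_eq_of_toList {w : Word M} {x : Σ i, M i} {t : List (Σ i, M i)}
    (h : w.toList = x :: t) : w.fstIdx = some x.1 := by
  simp [Word.fstIdx, h]

theorem key {i j : ι} (hij : i ≠ j) (m : M i) (n : M j) (hm : m ≠ 1) (hn : n ≠ 1)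
    (w : Word M) (hw : ¬ ∃ t, w.toList = ⟨j, n⟩ :: ⟨i, m⟩ :: t) :
    ∃ t, ((CoprodI.of m * CoprodI.of n * (CoprodI.of m)⁻¹ * (CoprodI.of n)⁻¹) • w).toList
      = ⟨i, m⟩ :: ⟨j, n⟩ :: t := by
  have hsplit : (CoprodI.of m * CoprodI.of n * (CoprodI.of m)⁻¹ * (CoprodI.of n)⁻¹) • w
      = CoprodI.of m • (CoprodI.of n • ((CoprodI.of m)⁻¹ • ((CoprodI.of n)⁻¹ • w))) := by
    simp only [mul_smul]
  set p := Word.equivPair j w with hp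
  have hw_eq : CoprodI.of p.head • p.tail = w := Word.equivPair_head_smul_equivPair_tail w
  have h1 : (CoprodI.of n)⁻¹ • w = CoprodI.of (n⁻¹ * p.head) • p.tail := by
    rw [← hw_eq, ← map_inv, smul_smul, ← map_mul]
  by_cases hcase : p.head = n
  · -- cancellation case
    have h1' : (CoprodI.of n)⁻¹ • w = p.tail := by
      rw [h1, hcase, inv_mul_cancel, map_one, one_smul]
    set q := Word.equivPair i p.tail with hq
    have hq_eq : CoprodI.of q.head • q.tail = p.tail := Word.equivPair_head_smul_equivPair_tail _
    by_cases hc2 : q.head = m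
    · exfalso
      have lt : p.tail.toList = ⟨i, m⟩ :: q.tail.toList := by
        rw [← hq_eq, hc2]
        exact toList_of_smul hm q.fstIdx_ne
      have hfst : p.tail.fstIdx ≠ some j := by
        rw [fstIdx_eq_of_toList lt]
        simp [hij]
      have lw : w.toList = ⟨j, n⟩ :: p.tail.toList := by
        rw [← hw_eq, hcase]
        exact toList_of_smul hn hfst
      exact hw ⟨_, by rw [lw, lt]⟩
    · have hne2 : m⁻¹ * q.head ≠ 1 := by
        intro hcontra
        exact hc2 (inv_mul_eq_one.mp hcontra).symm
      have h2 : (CoprodI.of m)⁻¹ • ((CoprodI.of n)⁻¹ • w) = CoprodI.of (m⁻¹ * q.head) • q.tail := by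
        rw [h1', ← hq_eq, ← map_inv, smul_smul, ← map_mul]
      have l2 : ((CoprodI.of m)⁻¹ • ((CoprodI.of n)⁻¹ • w)).toList
          = ⟨i, m⁻¹ * q.head⟩ :: q.tail.toList := by
        rw [h2]; exact toList_of_smul hne2 q.fstIdx_ne
      have f2 : ((CoprodI.of m)⁻¹ • ((CoprodI.of n)⁻¹ • w)).fstIdx ≠ some j := by
        rw [fstIdx_eq_of_toList l2]; simp [hij]
      have l3 : (CoprodI.of n • ((CoprodI.of m)⁻¹ • ((CoprodI.of n)⁻¹ • w))).toList
          = ⟨j, n⟩ :: ⟨i, m⁻¹ * q.head⟩ :: q.tail.toList := by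
        rw [toList_of_smul hn f2, l2]
      have f3 : (CoprodI.of n • ((CoprodI.of m)⁻¹ • ((CoprodI.of n)⁻¹ • w))).fstIdx ≠ some i := by
        rw [fstIdx_eq_of_toList l3]; simp [Ne.symm hij]
      exact ⟨_, by rw [hsplit, toList_of_smul hm f3, l3]⟩
  · have hne1 : n⁻¹ * p.head ≠ 1 := by
      intro hcontra
      exact hcase (inv_mul_eq_one.mp hcontra).symm
    have l1 : ((CoprodI.of n)⁻¹ • w).toList = ⟨j, n⁻¹ * p.head⟩ :: p.tail.toList := by
      rw [h1]; exact toList_of_smul hne1 p.fstIdx_ne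
    have f1 : ((CoprodI.of n)⁻¹ • w).fstIdx ≠ some i := by
      rw [fstIdx_eq_of_toList l1]; simp [Ne.symm hij]
    have l2 : ((CoprodI.of m)⁻¹ • ((CoprodI.of n)⁻¹ • w)).toList
        = ⟨i, m⁻¹⟩ :: ⟨j, n⁻¹ * p.head⟩ :: p.tail.toList := by
      rw [← map_inv, toList_of_smul (inv_ne_one.mpr hm) f1, l1]
    have f2 : ((CoprodI.of m)⁻¹ • ((CoprodI.of n)⁻¹ • w)).fstIdx ≠ some j := by
      rw [fstIdx_eq_of_toList l2]; simp [hij]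
    have l3 : (CoprodI.of n • ((CoprodI.of m)⁻¹ • ((CoprodI.of n)⁻¹ • w))).toList
        = ⟨j, n⟩ :: ⟨i, m⁻¹⟩ :: ⟨j, n⁻¹ * p.head⟩ :: p.tail.toList := by
      rw [toList_of_smul hn f2, l2]
    have f3 : (CoprodI.of n • ((CoprodI.of m)⁻¹ • ((CoprodI.of n)⁻¹ • w))).fstIdx ≠ some i := by
      rw [fstIdx_eq_of_toList l3]; simp [Ne.symm hij]
    exact ⟨_, by rw [hsplit, toList_of_smul hm f3, l3]⟩

end Words

/-! ### Ping-pong: injectivity of the lift sending generators to commutators -/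

universe uu vv

theorem lift_comm_injective {ι : Type uu} [DecidableEq ι] {M : ι → Type vv}
    [∀ i, Group (M i)] [∀ i, DecidableEq (M i)]
    {i j : ι} (hij : i ≠ j) {S : Type (max uu vv)} [Nontrivial S]
    (m : S → M i) (n : S → M j) (hm : ∀ s, m s ≠ 1) (hn : ∀ s, n s ≠ 1)
    (hinj : Function.Injective fun s => (m s, n s)) :
    Function.Injective (FreeGroup.lift fun s =>
      CoprodI.of (m s) * CoprodI.of (n s) * (CoprodI.of (m s))⁻¹ * (CoprodI.of (n s))⁻¹) := by
  let a : S → CoprodI M := fun s =>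
    CoprodI.of (m s) * CoprodI.of (n s) * (CoprodI.of (m s))⁻¹ * (CoprodI.of (n s))⁻¹
  let X : S → Set (Word M) := fun s => {w | ∃ t, w.toList = ⟨i, m s⟩ :: ⟨j, n s⟩ :: t}
  let Y : S → Set (Word M) := fun s => {w | ∃ t, w.toList = ⟨j, n s⟩ :: ⟨i, m s⟩ :: t}
  refine FreeGroup.injective_lift_of_ping_pong (ι := S) (G := CoprodI M) (α := Word M)
    a X Y ?_ ?_ ?_ ?_ ?_ ?_
  · -- nonempty
    intro s
    have h1 : (CoprodI.of (n s) • (Word.empty : Word M)).toList = [⟨j, n s⟩] :=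
      toList_of_smul (hn s) (by simp [Word.fstIdx, Word.empty])
    have h0 : (CoprodI.of (n s) • (Word.empty : Word M)).fstIdx ≠ some i := by
      rw [fstIdx_eq_of_toList h1]; simp [Ne.symm hij]
    exact ⟨_, ⟨[], by rw [toList_of_smul (hm s) h0, h1]⟩⟩
  · -- X pairwise disjoint
    intro s s' hne
    rw [Function.onFun, Set.disjoint_left]
    rintro w ⟨t, ht⟩ ⟨t', ht'⟩
    rw [ht] at ht'
    simp only [List.cons.injEq, Sigma.ext_iff, heq_eq_eq, true_and] at ht'
    exact hne (hinj (by rw [Prod.mk.injEq]; exact ⟨ht'.1, ht'.2.1⟩))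
  · -- Y pairwise disjoint
    intro s s' hne
    rw [Function.onFun, Set.disjoint_left]
    rintro w ⟨t, ht⟩ ⟨t', ht'⟩
    rw [ht] at ht'
    simp only [List.cons.injEq, Sigma.ext_iff, heq_eq_eq, true_and] at ht'
    exact hne (hinj (by rw [Prod.mk.injEq]; exact ⟨ht'.2.1, ht'.1⟩))
  · -- X vs Y disjoint
    intro s s'
    rw [Set.disjoint_left]
    rintro w ⟨t, ht⟩ ⟨t', ht'⟩
    rw [ht] at ht'
    simp only [List.cons.injEq, Sigma.ext_iff] at ht'
    exact hij ht'.1.1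
  · -- hX
    intro s
    rintro x ⟨w, hw, rfl⟩
    exact key hij (m s) (n s) (hm s) (hn s) w hw
  · -- hY
    intro s
    rintro x ⟨w, hw, rfl⟩
    show (a s)⁻¹ • w ∈ Y s
    have e : (a s)⁻¹
        = CoprodI.of (n s) * CoprodI.of (m s) * (CoprodI.of (n s))⁻¹ * (CoprodI.of (m s))⁻¹ := by
      show (CoprodI.of (m s) * CoprodI.of (n s) * (CoprodI.of (m s))⁻¹ * (CoprodI.of (n s))⁻¹)⁻¹
        = _
      group
    rw [e]
    exact key (Ne.symm hij) (n s) (m s) (hn s) (hm s) w hw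

/-! ### The free subgroup of a two-factor free product -/

universe u v

variable (A : Type u) (B : Type v) [Group A] [Group B]

/-- Index type for the free generators. -/
abbrev S' := ({a : A // a ≠ 1} × {b : B // b ≠ 1} : Type (max u v))

/-- The commutator generators. -/
def cgen (s : S' A B) : Monoid.Coprod A B :=
  Coprod.inl s.1.1 * Coprod.inr s.2.1 * (Coprod.inl s.1.1)⁻¹ * (Coprod.inr s.2.1)⁻¹

/-- The two-element family of groups. -/
def Kfam : Bool → Type (max u v) := fun b => cond b (ULift.{v} A) (ULift.{u} B)

instance : ∀ b, Group (Kfam A B b)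
  | true => inferInstanceAs (Group (ULift A))
  | false => inferInstanceAs (Group (ULift B))

noncomputable instance : ∀ b, DecidableEq (Kfam A B b) := fun _ => Classical.decEq _

def upA : A →* ULift.{v} A where
  toFun := ULift.up
  map_one' := rfl
  map_mul' := fun _ _ => rfl

def upB : B →* ULift.{u} B where
  toFun := ULift.up
  map_one' := rfl
  map_mul' := fun _ _ => rfl

/-- Comparison homomorphism into the indexed free product. -/
noncomputable def θ : Monoid.Coprod A B →* CoprodI (Kfam A B) :=
  Coprod.lift ((CoprodI.of (M := Kfam A B) (i := true)).comp (upA A))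
              ((CoprodI.of (M := Kfam A B) (i := false)).comp (upB B))

def mfun (s : S' A B) : Kfam A B true := ULift.up s.1.1
def nfun (s : S' A B) : Kfam A B false := ULift.up s.2.1

theorem lift_cgen_injective (hnt : Nontrivial (S' A B)) :
    Function.Injective (FreeGroup.lift (cgen A B)) := by
  haveI := hnt
  have hinj2 : Function.Injective (FreeGroup.lift fun s : S' A B =>
      CoprodI.of (mfun A B s) * CoprodI.of (nfun A B s) *
        (CoprodI.of (mfun A B s))⁻¹ * (CoprodI.of (nfun A B s))⁻¹) := by
    refine lift_comm_injective (i := true) (j := false) (by simp)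
      (mfun A B) (nfun A B) ?_ ?_ ?_
    · intro s hs
      exact s.1.2 (congrArg ULift.down hs)
    · intro s hs
      exact s.2.2 (congrArg ULift.down hs)
    · intro s s' hss
      rw [Prod.mk.injEq] at hss
      have h1 : s.1.1 = s'.1.1 := congrArg ULift.down hss.1
      have h2 : s.2.1 = s'.2.1 := congrArg ULift.down hss.2
      exact Prod.ext (Subtype.ext h1) (Subtype.ext h2)
  have hcomp : (θ A B).comp (FreeGroup.lift (cgen A B)) = FreeGroup.lift fun s : S' A B =>
      CoprodI.of (mfun A B s) * CoprodI.of (nfun A B s) *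
        (CoprodI.of (mfun A B s))⁻¹ * (CoprodI.of (nfun A B s))⁻¹ := by
    ext s
    simp only [MonoidHom.coe_comp, Function.comp_apply, FreeGroup.lift_apply_of, cgen, θ, map_mul,
      map_inv, Coprod.lift_apply_inl, Coprod.lift_apply_inr]
    rfl
  have : Function.Injective (⇑(θ A B) ∘ ⇑(FreeGroup.lift (cgen A B))) := by
    rw [← MonoidHom.coe_comp, hcomp]
    exact hinj2
  exact this.of_comp

theorem mem_aux (x : A) (y : B) :
    Coprod.inl x * Coprod.inr y * (Coprod.inl x)⁻¹ * (Coprod.inr y)⁻¹ ∈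
      (FreeGroup.lift (cgen A B)).range := by
  by_cases hx : x = 1
  · subst hx
    simpa using one_mem (FreeGroup.lift (cgen A B)).range
  · by_cases hy : y = 1
    · subst hy
      simpa using one_mem (FreeGroup.lift (cgen A B)).range
    · exact ⟨FreeGroup.of (⟨⟨x, hx⟩, ⟨y, hy⟩⟩ : S' A B), by simp [cgen]⟩

theorem conj_mem (g : Monoid.Coprod A B) :
    ∀ x ∈ (FreeGroup.lift (cgen A B)).range, g * x * g⁻¹ ∈ (FreeGroup.lift (cgen A B)).range := by
  induction g using Monoid.Coprod.induction_on with
  | mul g₁ g₂ h₁ h₂ =>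
    intro x hx
    have hmem := h₁ _ (h₂ x hx)
    have e : g₁ * g₂ * x * (g₁ * g₂)⁻¹ = g₁ * (g₂ * x * g₂⁻¹) * g₁⁻¹ := by group
    rw [e]
    exact hmem
  | inl m =>
    intro x hx
    rw [FreeGroup.range_lift_eq_closure] at hx
    induction hx using Subgroup.closure_induction with
    | mem x hx =>
      obtain ⟨⟨⟨a, ha⟩, ⟨b, hb⟩⟩, rfl⟩ := hx
      have e : Coprod.inl m * cgen A B ⟨⟨a, ha⟩, ⟨b, hb⟩⟩ * (Coprod.inl m)⁻¹ =
          (Coprod.inl (m * a) * Coprod.inr b * (Coprod.inl (m * a))⁻¹ * (Coprod.inr b)⁻¹) *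
          (Coprod.inl m * Coprod.inr b * (Coprod.inl m)⁻¹ * (Coprod.inr b)⁻¹)⁻¹ := by
        simp only [cgen, map_mul]
        group
      rw [e]
      exact mul_mem (mem_aux A B _ _) (inv_mem (mem_aux A B _ _))
    | one => simpa using one_mem (FreeGroup.lift (cgen A B)).range
    | mul x y hx hy ihx ihy =>
      have e : Coprod.inl m * (x * y) * (Coprod.inl m)⁻¹ =
          (Coprod.inl m * x * (Coprod.inl m)⁻¹) * (Coprod.inl m * y * (Coprod.inl m)⁻¹) := by
        group
      rw [e]
      exact mul_mem ihx ihy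
    | inv x hx ihx =>
      have e : Coprod.inl m * x⁻¹ * (Coprod.inl m)⁻¹ =
          (Coprod.inl m * x * (Coprod.inl m)⁻¹)⁻¹ := by group
      rw [e]
      exact inv_mem ihx
  | inr m =>
    intro x hx
    rw [FreeGroup.range_lift_eq_closure] at hx
    induction hx using Subgroup.closure_induction with
    | mem x hx =>
      obtain ⟨⟨⟨a, ha⟩, ⟨b, hb⟩⟩, rfl⟩ := hx
      have e : Coprod.inr m * cgen A B ⟨⟨a, ha⟩, ⟨b, hb⟩⟩ * (Coprod.inr m)⁻¹ =
          (Coprod.inl a * Coprod.inr m * (Coprod.inl a)⁻¹ * (Coprod.inr m)⁻¹)⁻¹ *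
          (Coprod.inl a * Coprod.inr (m * b) * (Coprod.inl a)⁻¹ * (Coprod.inr (m * b))⁻¹) := by
        simp only [cgen, map_mul]
        group
      rw [e]
      exact mul_mem (inv_mem (mem_aux A B _ _)) (mem_aux A B _ _)
    | one => simpa using one_mem (FreeGroup.lift (cgen A B)).range
    | mul x y hx hy ihx ihy =>
      have e : Coprod.inr m * (x * y) * (Coprod.inr m)⁻¹ =
          (Coprod.inr m * x * (Coprod.inr m)⁻¹) * (Coprod.inr m * y * (Coprod.inr m)⁻¹) := by
        group
      rw [e]
      exact mul_mem ihx ihy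
    | inv x hx ihx =>
      have e : Coprod.inr m * x⁻¹ * (Coprod.inr m)⁻¹ =
          (Coprod.inr m * x * (Coprod.inr m)⁻¹)⁻¹ := by group
      rw [e]
      exact inv_mem ihx

theorem range_normal : ((FreeGroup.lift (cgen A B)).range).Normal :=
  ⟨fun x hx g => conj_mem A B g x hx⟩

theorem range_eq_ker :
    (FreeGroup.lift (cgen A B)).range = (Coprod.toProd : Monoid.Coprod A B →* A × B).ker := by
  haveI := range_normal A B
  apply le_antisymm
  · rw [FreeGroup.range_lift_eq_closure, Subgroup.closure_le]
    rintro x ⟨s, rfl⟩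
    have : Coprod.toProd (cgen A B s) = 1 := by
      simp only [cgen, map_mul, map_inv, Coprod.toProd_apply_inl, Coprod.toProd_apply_inr,
        Prod.mk_mul_mk, Prod.inv_mk, Prod.mk_eq_one]
      constructor <;> group
    exact this
  · set N := (FreeGroup.lift (cgen A B)).range
    have hcomm : ∀ (x : A) (y : B),
        Commute ((QuotientGroup.mk' N) (Coprod.inl x)) ((QuotientGroup.mk' N) (Coprod.inr y)) := by
      intro x y
      have hmem : (Coprod.inr y * Coprod.inl x)⁻¹ * (Coprod.inl x * Coprod.inr y) ∈ N := by
        have e : (Coprod.inr y * Coprod.inl x)⁻¹ * (Coprod.inl x * Coprod.inr y)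
            = Coprod.inl x⁻¹ * Coprod.inr y⁻¹ * (Coprod.inl x⁻¹)⁻¹ * (Coprod.inr y⁻¹)⁻¹ := by
          simp only [map_inv]
          group
        rw [e]
        exact mem_aux A B _ _
      have h2 : (QuotientGroup.mk' N) (Coprod.inr y * Coprod.inl x)
          = (QuotientGroup.mk' N) (Coprod.inl x * Coprod.inr y) := by
        rw [QuotientGroup.mk'_eq_mk']
        exact ⟨_, hmem, by group⟩
      have : (QuotientGroup.mk' N) (Coprod.inl x) * (QuotientGroup.mk' N) (Coprod.inr y)
          = (QuotientGroup.mk' N) (Coprod.inr y) * (QuotientGroup.mk' N) (Coprod.inl x) := by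
        rw [← map_mul, ← map_mul]
        exact h2.symm
      exact this
    set ψ : A × B →* Monoid.Coprod A B ⧸ N :=
      ((QuotientGroup.mk' N).comp Coprod.inl).noncommCoprod
        ((QuotientGroup.mk' N).comp Coprod.inr) hcomm with hψ
    have heq : ψ.comp Coprod.toProd = QuotientGroup.mk' N := by
      apply Coprod.hom_ext
      · ext x
        simp [hψ, Coprod.toProd_apply_inl]
      · ext y
        simp [hψ, Coprod.toProd_apply_inr]
    intro x hx
    have h1 : (QuotientGroup.mk' N) x = 1 := by
      rw [← heq]
      show ψ (Coprod.toProd x) = 1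
      rw [MonoidHom.mem_ker] at hx
      rw [hx, map_one]
    exact (QuotientGroup.eq_one_iff x).mp h1

end Stmt19

/-- A free product of two nontrivial finite groups, not both of order 2, has a
finite-index subgroup which is a nonabelian free group. -/
theorem stmt_19 (A B : Type*) [Group A] [Group B] [Finite A] [Finite B]
    (hA : 2 ≤ Nat.card A) (hB : 2 ≤ Nat.card B)
    (h : ¬(Nat.card A = 2 ∧ Nat.card B = 2)) :
    ∃ H : Subgroup (Monoid.Coprod A B), H.FiniteIndex ∧
      ∃ k : ℕ, 2 ≤ k ∧ Nonempty (H ≃* FreeGroup (Fin k)) := by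
  classical
  have hcardA : Nat.card {a : A // a ≠ 1} = Nat.card A - 1 := by
    haveI := Fintype.ofFinite A
    have h1 := Fintype.card_subtype_compl (α := A) (fun a => a = 1)
    rw [Fintype.card_subtype_eq] at h1
    simpa [Nat.card_eq_fintype_card] using h1
  have hcardB : Nat.card {b : B // b ≠ 1} = Nat.card B - 1 := by
    haveI := Fintype.ofFinite B
    have h1 := Fintype.card_subtype_compl (α := B) (fun b => b = 1)
    rw [Fintype.card_subtype_eq] at h1
    simpa [Nat.card_eq_fintype_card] using h1
  have hcardS : Nat.card (Stmt19.S' A B) = (Nat.card A - 1) * (Nat.card B - 1) := by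
    rw [Nat.card_prod, hcardA, hcardB]
  have hk : 2 ≤ Nat.card (Stmt19.S' A B) := by
    rw [hcardS]
    have h3 : 3 ≤ Nat.card A ∨ 3 ≤ Nat.card B := by omega
    rcases h3 with h3 | h3
    · calc (2 : ℕ) = 2 * 1 := rfl
        _ ≤ (Nat.card A - 1) * (Nat.card B - 1) := Nat.mul_le_mul (by omega) (by omega)
    · calc (2 : ℕ) = 1 * 2 := rfl
        _ ≤ (Nat.card A - 1) * (Nat.card B - 1) := Nat.mul_le_mul (by omega) (by omega)
  haveI hnt : Nontrivial (Stmt19.S' A B) := Finite.one_lt_card_iff_nontrivial.mp (by omega)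
  have hinj := Stmt19.lift_cgen_injective A B hnt
  refine ⟨(FreeGroup.lift (Stmt19.cgen A B)).range, ?_, Nat.card (Stmt19.S' A B), hk, ?_⟩
  · rw [Stmt19.range_eq_ker]
    exact Subgroup.finiteIndex_ker _
  · exact ⟨((MonoidHom.ofInjective hinj).symm.trans
      (FreeGroup.freeGroupCongr (Finite.equivFin (Stmt19.S' A B))))⟩
end
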